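/- arXiv:1411.6982 — 4 statements merged into one kernel-verified Lean document; each statement's English description precedes it below -/
import Mathlib

section
/- Let α, β ∈ (0, 2π) be real numbers such that α, β, π are linearly independent over ℚ. Then for every real x, y and every ε > 0 there exists an integer n such that |e^{inα} − e^{ix}| < ε and |e^{inβ} − e^{iy}| < ε. -/
/-!
Bohr's argument. Suppose `‖(1 + c aⁿ)(1 + d bⁿ)‖ ≤ B` for all `n`, with `a, b, c, d` on the unit
circle. The `p`-th power of this product is the trigonometric polynomial
`∑ C(p,j) C(p,k) cʲ dᵏ (aʲ bᵏ)ⁿ`, whose frequencies `aʲ bᵏ` are pairwise distinct because `a` and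
`b` are multiplicatively independent. Averaging over `n` isolates each coefficient, so
`C(p,j) C(p,k) ≤ Bᵖ`, and summing over `j, k` gives `4ᵖ ≤ (p+1)² Bᵖ` for every `p`, which forces
`B ≥ 4`. Hence the product comes arbitrarily close to norm `4`, which means that `c aⁿ` and `d bⁿ`
are simultaneously close to `1`.
-/

open Complex Real Filter Topology Finset

theorem norm_geom_sum_le {𝕜 : Type*} [NormedField 𝕜] {w : 𝕜} (hw : ‖w‖ ≤ 1) (hw1 : w ≠ 1)
    (N : ℕ) : ‖∑ n ∈ range N, w ^ n‖ ≤ 2 / ‖w - 1‖ := by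
  rw [geom_sum_eq hw1, norm_div]
  gcongr
  calc ‖w ^ N - 1‖ ≤ ‖w‖ ^ N + ‖(1 : 𝕜)‖ := by rw [← norm_pow]; exact norm_sub_le _ _
    _ ≤ 2 := by rw [norm_one]; linarith [pow_le_one₀ (norm_nonneg w) hw (n := N)]

theorem tendsto_inv_mul_geom_sum {w : ℂ} (hw : ‖w‖ ≤ 1) :
    Tendsto (fun N : ℕ ↦ (N : ℂ)⁻¹ * ∑ n ∈ range N, w ^ n) atTop
      (𝓝 (if w = 1 then 1 else 0)) := by
  split_ifs with hw1
  · refine tendsto_const_nhds.congr' ?_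
    filter_upwards [eventually_ge_atTop 1] with N hN
    have : (N : ℂ) ≠ 0 := by exact_mod_cast (Nat.one_le_iff_ne_zero.1 hN)
    simp [hw1, inv_mul_cancel₀ this]
  · have h := (tendsto_inv_atTop_zero.comp tendsto_natCast_atTop_atTop).mul_const (2 / ‖w - 1‖)
    rw [zero_mul] at h
    refine squeeze_zero_norm (fun N ↦ ?_) h
    rw [norm_mul, norm_inv, Complex.norm_natCast]
    exact mul_le_mul_of_nonneg_left (norm_geom_sum_le hw hw1 N) (by positivity)

theorem norm_le_of_forall_norm_sum_mul_pow_le_of_eq_one {ι : Type*} {s : Finset ι}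
    {c w : ι → ℂ} {i₀ : ι} (hi₀ : i₀ ∈ s) (hw : ∀ i ∈ s, ‖w i‖ ≤ 1)
    (hw₁ : ∀ i ∈ s, w i = 1 ↔ i = i₀) {B : ℝ} (hB : ∀ n : ℕ, ‖∑ i ∈ s, c i * w i ^ n‖ ≤ B) :
    ‖c i₀‖ ≤ B := by
  have hlim : Tendsto (fun N : ℕ ↦ ∑ i ∈ s, c i * ((N : ℂ)⁻¹ * ∑ n ∈ range N, w i ^ n)) atTop
      (𝓝 (c i₀)) := by
    convert tendsto_finsetSum s fun i hi ↦ (tendsto_inv_mul_geom_sum (hw i hi)).const_mul (c i)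
    rw [sum_eq_single_of_mem i₀ hi₀ fun i hi hne ↦ by simp [(hw₁ i hi).not.2 hne]]
    simp [(hw₁ i₀ hi₀).2 rfl]
  have hmean : ∀ N : ℕ, ‖∑ i ∈ s, c i * ((N : ℂ)⁻¹ * ∑ n ∈ range N, w i ^ n)‖ ≤ B := by
    intro N
    have hB₀ : 0 ≤ B := (norm_nonneg _).trans (hB 0)
    calc ‖∑ i ∈ s, c i * ((N : ℂ)⁻¹ * ∑ n ∈ range N, w i ^ n)‖
        = (N : ℝ)⁻¹ * ‖∑ n ∈ range N, ∑ i ∈ s, c i * w i ^ n‖ := by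
          rw [← Complex.norm_natCast N, ← norm_inv, ← norm_mul, sum_comm, mul_sum]
          simp_rw [mul_sum, mul_left_comm (c _)]
      _ ≤ (N : ℝ)⁻¹ * (N * B) := by
          gcongr
          exact (norm_sum_le _ _).trans (by simpa using sum_le_sum fun n (_ : n ∈ range N) ↦ hB n)
      _ ≤ B := by
          rcases N.eq_zero_or_pos with rfl | hN
          · simpa using hB₀
          · rw [inv_mul_cancel_left₀ (by positivity)]
  exact le_of_tendsto' hlim.norm hmean

theorem norm_le_of_forall_norm_sum_mul_pow_le {ι : Type*} {s : Finset ι}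
    {c z : ι → ℂ} {i₀ : ι} (hi₀ : i₀ ∈ s) (hz : ∀ i ∈ s, ‖z i‖ = 1) (hinj : Set.InjOn z s)
    {B : ℝ} (hB : ∀ n : ℕ, ‖∑ i ∈ s, c i * z i ^ n‖ ≤ B) :
    ‖c i₀‖ ≤ B := by
  have hz₀ : z i₀ ≠ 0 := norm_ne_zero_iff.1 (by rw [hz i₀ hi₀]; exact one_ne_zero)
  refine norm_le_of_forall_norm_sum_mul_pow_le_of_eq_one (w := fun i ↦ z i / z i₀) hi₀
    (fun i hi ↦ by simp [hz i hi, hz i₀ hi₀]) (fun i hi ↦ ?_) fun n ↦ ?_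
  · rw [div_eq_one_iff_eq hz₀]
    exact ⟨fun h ↦ hinj hi hi₀ h, fun h ↦ h ▸ rfl⟩
  · calc ‖∑ i ∈ s, c i * (z i / z i₀) ^ n‖ = ‖∑ i ∈ s, c i * z i ^ n‖ / ‖z i₀‖ ^ n := by
          simp_rw [div_pow, ← mul_div_assoc, ← sum_div, norm_div, norm_pow]
      _ ≤ B := by simpa [hz i₀ hi₀] using hB n

theorem one_add_mul_one_add_pow {R : Type*} [CommSemiring R] (u v : R) (p : ℕ) :
    ((1 + u) * (1 + v)) ^ p =
      ∑ q ∈ range (p + 1) ×ˢ range (p + 1), p.choose q.1 * p.choose q.2 * u ^ q.1 * v ^ q.2 := by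
  rw [mul_pow, add_comm 1 u, add_comm 1 v, add_pow, add_pow, sum_mul_sum, sum_product]
  refine sum_congr rfl fun j _ ↦ sum_congr rfl fun k _ ↦ ?_
  simp only [one_pow, mul_one]
  ring

theorem exists_sq_mul_pow_lt_pow {A B : ℝ} (hB : 0 ≤ B) (hBA : B < A) :
    ∃ p : ℕ, ((p : ℝ) + 1) ^ 2 * B ^ p < A ^ p := by
  have hA : 0 < A := hB.trans_lt hBA
  have hlim := tendsto_pow_const_mul_const_pow_of_lt_one 2 (div_nonneg hB hA.le)
    ((div_lt_one hA).2 hBA)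
  obtain ⟨p, hp, hp₁⟩ := ((hlim.eventually (gt_mem_nhds (by norm_num : (0 : ℝ) < 1 / 4))).and
    (eventually_ge_atTop 1)).exists
  have hp₁' : (1 : ℝ) ≤ p := by exact_mod_cast hp₁
  refine ⟨p, ?_⟩
  rw [div_pow, ← mul_div_assoc, div_lt_iff₀ (by positivity)] at hp
  have hsq : ((p : ℝ) + 1) ^ 2 ≤ 4 * p ^ 2 := by nlinarith
  calc ((p : ℝ) + 1) ^ 2 * B ^ p ≤ 4 * p ^ 2 * B ^ p := by gcongr
    _ < A ^ p := by linarith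

section UnitCircle

variable {a b : ℂ} (ha : ‖a‖ = 1) (hb : ‖b‖ = 1)
  (hab : ∀ j k : ℤ, a ^ j * b ^ k = 1 → j = 0 ∧ k = 0)
include ha hb hab

theorem injective_pow_mul_pow : Function.Injective fun q : ℕ × ℕ ↦ a ^ q.1 * b ^ q.2 := by
  have ha₀ : a ≠ 0 := norm_ne_zero_iff.1 (by simp [ha])
  have hb₀ : b ≠ 0 := norm_ne_zero_iff.1 (by simp [hb])
  rintro ⟨j, k⟩ ⟨j', k'⟩ h
  obtain ⟨hj, hk⟩ := hab (j - j') (k - k') (by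
    simp only [zpow_sub₀ ha₀, zpow_sub₀ hb₀, zpow_natCast] at h ⊢
    field_simp
    exact h)
  simp only [Prod.mk.injEq]
  omega

theorem four_pow_le_of_forall_norm_le {c d : ℂ} (hc : ‖c‖ = 1) (hd : ‖d‖ = 1) {B : ℝ}
    (hB : ∀ n : ℕ, ‖(1 + c * a ^ n) * (1 + d * b ^ n)‖ ≤ B) (p : ℕ) :
    (4 : ℝ) ^ p ≤ ((p : ℝ) + 1) ^ 2 * B ^ p := by
  set S := range (p + 1) ×ˢ range (p + 1)
  have hexpand : ∀ n : ℕ, ((1 + c * a ^ n) * (1 + d * b ^ n)) ^ p =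
      ∑ q ∈ S, p.choose q.1 * p.choose q.2 * c ^ q.1 * d ^ q.2 * (a ^ q.1 * b ^ q.2) ^ n := by
    intro n
    rw [one_add_mul_one_add_pow]
    refine sum_congr rfl fun q _ ↦ ?_
    rw [mul_pow, mul_pow, pow_right_comm a, pow_right_comm b]
    ring
  have hcoef : ∀ q ∈ S, (p.choose q.1 * p.choose q.2 : ℝ) ≤ B ^ p := by
    intro q hq
    have := norm_le_of_forall_norm_sum_mul_pow_le hq (fun q _ ↦ by simp [ha, hb])
      (injective_pow_mul_pow ha hb hab).injOn fun n ↦ by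
        rw [← hexpand, norm_pow]
        exact pow_le_pow_left₀ (norm_nonneg _) (hB n) p
    simpa [hc, hd] using this
  calc (4 : ℝ) ^ p = ∑ q ∈ S, (p.choose q.1 * p.choose q.2 : ℝ) := by
        rw [sum_product]
        dsimp only
        rw [← sum_mul_sum]
        exact_mod_cast by rw [Nat.sum_range_choose, ← mul_pow]; norm_num
    _ ≤ ∑ q ∈ S, B ^ p := sum_le_sum hcoef
    _ = ((p : ℝ) + 1) ^ 2 * B ^ p := by simp [S, sq]

theorem exists_lt_norm_one_add_mul_pow_mul {c d : ℂ} (hc : ‖c‖ = 1) (hd : ‖d‖ = 1) {B : ℝ}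
    (hB : B < 4) : ∃ n : ℕ, B < ‖(1 + c * a ^ n) * (1 + d * b ^ n)‖ := by
  by_contra! h
  obtain ⟨p, hp⟩ := exists_sq_mul_pow_lt_pow ((norm_nonneg _).trans (h 0)) hB
  linarith [four_pow_le_of_forall_norm_le ha hb hab hc hd h p]

end UnitCircle

theorem norm_sub_one_sq_lt_of_lt_norm_mul {u v : ℂ} (hu : ‖u‖ = 1) (hv : ‖v‖ = 1) {δ : ℝ}
    (h : 4 - δ < ‖(1 + u) * (1 + v)‖) : ‖u - 1‖ ^ 2 < 2 * δ := by
  have hpar := parallelogram_law_with_norm ℝ (1 : ℂ) u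
  have hu₂ : ‖1 + u‖ ≤ 2 := (norm_add_le _ _).trans (by simp [hu]; norm_num)
  have hv₂ : ‖1 + v‖ ≤ 2 := (norm_add_le _ _).trans (by simp [hv]; norm_num)
  rw [norm_mul] at h
  rw [norm_sub_rev]
  simp only [norm_one, hu] at hpar
  nlinarith [norm_nonneg (1 + u), norm_nonneg (1 + v)]

theorem exists_pow_sub_lt {a b : ℂ} (ha : ‖a‖ = 1) (hb : ‖b‖ = 1)
    (hab : ∀ j k : ℤ, a ^ j * b ^ k = 1 → j = 0 ∧ k = 0) {s t : ℂ} (hs : ‖s‖ = 1)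
    (ht : ‖t‖ = 1) {ε : ℝ} (hε : 0 < ε) : ∃ n : ℕ, ‖a ^ n - s‖ < ε ∧ ‖b ^ n - t‖ < ε := by
  have hdist : ∀ {z w : ℂ}, ‖w‖ = 1 → ‖z - w‖ = ‖w⁻¹ * z - 1‖ := fun {z w} hw ↦ by
    have hw₀ : w ≠ 0 := norm_ne_zero_iff.1 (by simp [hw])
    rw [← one_mul ‖_ - 1‖, ← hw, ← norm_mul, mul_sub, mul_inv_cancel_left₀ hw₀, mul_one]
  have hs' : ‖s⁻¹‖ = 1 := by simp [hs]
  have ht' : ‖t⁻¹‖ = 1 := by simp [ht]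
  obtain ⟨n, hn⟩ := exists_lt_norm_one_add_mul_pow_mul ha hb hab hs' ht'
    (by linarith [sq_pos_of_pos hε] : 4 - ε ^ 2 / 2 < 4)
  have hu : ‖s⁻¹ * a ^ n‖ = 1 := by simp [hs, ha]
  have hv : ‖t⁻¹ * b ^ n‖ = 1 := by simp [ht, hb]
  refine ⟨n, ?_, ?_⟩
  · rw [hdist hs]
    refine lt_of_pow_lt_pow_left₀ 2 hε.le ?_
    linarith [norm_sub_one_sq_lt_of_lt_norm_mul hu hv hn]
  · rw [hdist ht]
    refine lt_of_pow_lt_pow_left₀ 2 hε.le ?_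
    linarith [norm_sub_one_sq_lt_of_lt_norm_mul hv hu (by rwa [mul_comm] at hn)]

theorem exp_mul_I_zpow_mul_zpow_eq_one {α β : ℝ} (hind : LinearIndependent ℚ ![α, β, π])
    (j k : ℤ) (h : exp (α * I) ^ j * exp (β * I) ^ k = 1) : j = 0 ∧ k = 0 := by
  rw [← exp_int_mul, ← exp_int_mul, ← Complex.exp_add, Complex.exp_eq_one_iff] at h
  obtain ⟨m, hm⟩ := h
  have hreal : (j : ℝ) * α + k * β = m * (2 * π) := by simpa using congrArg Complex.im hm
  have := Fintype.linearIndependent_iff.1 hind ![(j : ℚ), k, -2 * m] (by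
    simp only [Fin.sum_univ_three, Rat.smul_def, Matrix.cons_val, Rat.cast_intCast, Rat.cast_mul,
      Rat.cast_neg, Rat.cast_ofNat]
    linear_combination hreal)
  exact ⟨by simpa using this 0, by simpa using this 1⟩

theorem kronecker_two_frequencies_general (α β : ℝ)
    (hind : LinearIndependent ℚ ![α, β, π])
    (x y : ℝ) (ε : ℝ) (hε : 0 < ε) :
    ∃ n : ℤ,
      ‖Complex.exp ((n : ℂ) * (α : ℂ) * Complex.I) - Complex.exp ((x : ℂ) * Complex.I)‖ < ε ∧
      ‖Complex.exp ((n : ℂ) * (β : ℂ) * Complex.I) - Complex.exp ((y : ℂ) * Complex.I)‖ < ε := by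
  obtain ⟨n, hα, hβ⟩ := exists_pow_sub_lt (norm_exp_ofReal_mul_I α) (norm_exp_ofReal_mul_I β)
    (exp_mul_I_zpow_mul_zpow_eq_one hind) (norm_exp_ofReal_mul_I x) (norm_exp_ofReal_mul_I y) hε
  refine ⟨n, ?_, ?_⟩ <;> rwa [Int.cast_natCast, mul_assoc, Complex.exp_nat_mul]

/-- Kronecker's approximation theorem for two frequencies. -/
theorem kronecker_two_frequencies (α β : ℝ)
    (hα : α ∈ Set.Ioo (0 : ℝ) (2 * π)) (hβ : β ∈ Set.Ioo (0 : ℝ) (2 * π))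
    (hind : LinearIndependent ℚ ![α, β, π])
    (x y : ℝ) (ε : ℝ) (hε : 0 < ε) :
    ∃ n : ℤ,
      ‖Complex.exp ((n : ℂ) * (α : ℂ) * Complex.I) - Complex.exp ((x : ℂ) * Complex.I)‖ < ε ∧
      ‖Complex.exp ((n : ℂ) * (β : ℂ) * Complex.I) - Complex.exp ((y : ℂ) * Complex.I)‖ < ε :=
  kronecker_two_frequencies_general α β hind x y ε hε
end

section
/- Let α, β, π be linearly independent over ℚ. Then the closure of the set {(e^{inα}, e^{inβ}) : n ∈ ℤ} in ℂ × ℂ equals the full torus {z ∈ ℂ : |z| = 1} × {u ∈ ℂ : |u| = 1}. -/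
/-!
Put `x = (α / 2π, β / 2π)` on the torus `ℝ² / ℤ²`, let `K` be the closure of the subgroup it
generates and `ν` the push-forward of the Haar measure of `K`. Translation by `x ∈ K` preserves `ν`,
so every Fourier coefficient satisfies `ν̂ n = e_n(x) ν̂ n`, and `e_n(x) ≠ 1` for `n ≠ 0` by the
linear independence of `α, β, π`; hence `ν̂ n = 0` for `n ≠ 0`. A finite measure on the torus is
determined by its Fourier coefficients, so `ν` is invariant under every translation. Being nonzero
and carried by `K`, it forces `K` to be the whole torus.
-/

open Complex Real

open MeasureTheory Set

theorem AddSubgroup.map_add_left_map_subtype_val_eq_self {G : Type*} [AddGroup G]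
    [MeasurableSpace G] [MeasurableAdd G] {K : AddSubgroup G}
    (μ : Measure K) [μ.IsAddLeftInvariant] {x : G} (hx : x ∈ K) :
    (μ.map Subtype.val).map (x + ·) = μ.map Subtype.val := by
  have hadd : Measurable ((⟨x, hx⟩ : K) + ·) :=
    ((measurable_const_add x).comp measurable_subtype_coe).subtype_mk
  have hcomp : (x + ·) ∘ Subtype.val = Subtype.val ∘ ((⟨x, hx⟩ : K) + ·) := rfl
  rw [Measure.map_map (measurable_const_add x) measurable_subtype_coe, hcomp,
    ← Measure.map_map measurable_subtype_coe hadd,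
    map_add_left_eq_self]

theorem AddCircle.toCircle_surjective {T : ℝ} (hT : T ≠ 0) :
    Function.Surjective (AddCircle.toCircle (T := T)) := by
  intro z
  obtain ⟨t, ht⟩ := (AddCircle.homeomorphCircle hT).surjective z
  exact ⟨t, by rwa [AddCircle.homeomorphCircle_apply] at ht⟩

namespace UnitAddTorus

variable {d : Type*} [Fintype d]

theorem measure_ext_of_integral_mFourier_eq {P P' : Measure (UnitAddTorus d)}
    [IsFiniteMeasure P] [IsFiniteMeasure P']
    (h : ∀ n, ∫ t, mFourier n t ∂P = ∫ t, mFourier n t ∂P') : P = P' := by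
  have hint (f : C(UnitAddTorus d, ℂ)) (Q : Measure (UnitAddTorus d)) [IsFiniteMeasure Q] :
      Integrable f Q :=
    f.continuous.integrable_of_hasCompactSupport (.of_compactSpace _)
  have hspan : ∀ f ∈ Submodule.span ℂ (range (mFourier (d := d))),
      ∫ t, f t ∂P = ∫ t, f t ∂P' := by
    intro f hf
    induction hf using Submodule.span_induction with
    | mem f hf => obtain ⟨n, rfl⟩ := hf; exact h n
    | zero => simp
    | add f g _ _ hf hg =>
      simp only [ContinuousMap.add_apply]
      rw [integral_add (hint f P) (hint g P), integral_add (hint f P') (hint g P'), hf, hg]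
    | smul c f _ hf =>
      simp only [ContinuousMap.smul_apply]
      rw [integral_smul, integral_smul, hf]
  refine ext_of_forall_mem_subalgebra_integral_eq_of_polish (𝕜 := ℂ)
    (A := (mFourierSubalgebra d).comap (BoundedContinuousFunction.toContinuousMapStarₐ ℂ)) ?_ ?_
  · intro p q hpq
    obtain ⟨_, ⟨f, hf, rfl⟩, hfpq⟩ := mFourierSubalgebra_separatesPoints hpq
    exact ⟨_, ⟨BoundedContinuousFunction.mkOfCompact f, ⟨_, hf, rfl⟩, rfl⟩, hfpq⟩
  · intro g hg
    refine hspan (g.toContinuousMap) ?_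
    rw [← mFourierSubalgebra_coe]
    exact hg

theorem mFourier_apply_add (n : d → ℤ) (x y : UnitAddTorus d) :
    mFourier n (x + y) = mFourier n x * mFourier n y := by
  simp only [mFourier, ContinuousMap.coe_mk, Pi.add_apply, fourier_apply, smul_add,
    AddCircle.toCircle_add, Circle.coe_mul, Finset.prod_mul_distrib]

theorem integral_mFourier_map_add_left (ν : Measure (UnitAddTorus d)) (n : d → ℤ)
    (y : UnitAddTorus d) :
    ∫ t, mFourier n t ∂ν.map (y + ·) = mFourier n y * ∫ t, mFourier n t ∂ν := by
  rw [integral_map (measurable_const_add y).aemeasurable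
    (mFourier n).continuous.aestronglyMeasurable, ← integral_const_mul]
  simp only [mFourier_apply_add]

theorem integral_mFourier_eq_zero_of_map_add_left_eq {ν : Measure (UnitAddTorus d)}
    {x : UnitAddTorus d} (hν : ν.map (x + ·) = ν) {n : d → ℤ} (hn : mFourier n x ≠ 1) :
    ∫ t, mFourier n t ∂ν = 0 := by
  have h := integral_mFourier_map_add_left ν n x
  rw [hν] at h
  have : (mFourier n x - 1) * ∫ t, mFourier n t ∂ν = 0 := by linear_combination -h
  exact (mul_eq_zero.1 this).resolve_left (sub_ne_zero.2 hn)

theorem map_add_left_eq_self_of_mFourier_ne_one {ν : Measure (UnitAddTorus d)}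
    [IsFiniteMeasure ν] {x : UnitAddTorus d} (hx : ∀ n ≠ 0, mFourier n x ≠ 1)
    (hν : ν.map (x + ·) = ν) (y : UnitAddTorus d) : ν.map (y + ·) = ν := by
  refine measure_ext_of_integral_mFourier_eq fun n => ?_
  rw [integral_mFourier_map_add_left]
  rcases eq_or_ne n 0 with rfl | hn
  · simp [mFourier_zero]
  · rw [integral_mFourier_eq_zero_of_map_add_left_eq hν (hx n hn), mul_zero]

end UnitAddTorus

namespace UnitAddTorus

variable {d : Type*} [Fintype d]

theorem dense_zmultiples_of_mFourier_ne_one {x : UnitAddTorus d}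
    (hx : ∀ n ≠ 0, mFourier n x ≠ 1) :
    Dense (AddSubgroup.zmultiples x : Set (UnitAddTorus d)) := by
  set K := (AddSubgroup.zmultiples x).topologicalClosure
  have hKc : IsClosed (K : Set (UnitAddTorus d)) := AddSubgroup.isClosed_topologicalClosure _
  rw [dense_iff_closure_eq, ← AddSubgroup.topologicalClosure_coe, eq_univ_iff_forall]
  intro y
  by_contra hy
  have : CompactSpace K := isCompact_iff_compactSpace.mp hKc.isCompact
  set μ : Measure K := Measure.addHaar
  set ν := μ.map Subtype.val
  have hνx : ν.map (x + ·) = ν := AddSubgroup.map_add_left_map_subtype_val_eq_self μ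
    (AddSubgroup.le_topologicalClosure _ (AddSubgroup.mem_zmultiples x))
  have hνy := map_add_left_eq_self_of_mFourier_ne_one hx hνx y
  have hνK : ν K = μ univ := by
    rw [Measure.map_apply measurable_subtype_coe hKc.measurableSet]
    congr
    ext
    simp
  have hνyK : ν.map (y + ·) K = 0 := by
    rw [Measure.map_apply (measurable_const_add y) hKc.measurableSet,
      Measure.map_apply measurable_subtype_coe (measurable_const_add y hKc.measurableSet)]
    convert measure_empty (μ := μ)
    ext k
    simp only [mem_preimage, SetLike.mem_coe, mem_empty_iff_false, iff_false]
    intro hyk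
    exact hy (by simpa using K.sub_mem hyk k.2 : y ∈ K)
  rw [hνy, hνK] at hνyK
  exact NeZero.ne μ (Measure.measure_univ_eq_zero.1 hνyK)

theorem mFourier_apply_coe (n : d → ℤ) (θ : d → ℝ) :
    mFourier n (fun i => (θ i : UnitAddCircle)) = Complex.exp (2 * π * I * ∑ i, n i * θ i) := by
  simp only [mFourier, ContinuousMap.coe_mk, fourier_coe_apply, ← Complex.exp_sum]
  push_cast
  rw [Finset.mul_sum]
  refine congrArg Complex.exp (Finset.sum_congr rfl fun i _ => ?_)
  ring

theorem dense_zmultiples_coe {θ : d → ℝ}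
    (hθ : ∀ (n : d → ℤ) (k : ℤ), ∑ i, n i * θ i = k → n = 0) :
    Dense (AddSubgroup.zmultiples (fun i => (θ i : UnitAddCircle)) : Set (UnitAddTorus d)) := by
  refine dense_zmultiples_of_mFourier_ne_one fun n hn h => hn ?_
  rw [mFourier_apply_coe, Complex.exp_eq_one_iff] at h
  obtain ⟨k, hk⟩ := h
  refine hθ n k ?_
  have : (2 * π * I) * ((∑ i, n i * θ i : ℝ) - k) = 0 := by linear_combination hk
  have h2 : (2 * π * I) ≠ 0 := by simp [pi_ne_zero]
  exact_mod_cast sub_eq_zero.1 ((mul_eq_zero.1 this).resolve_left h2)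

end UnitAddTorus

theorem range_toCircle_pair :
    range (fun t : UnitAddTorus (Fin 2) =>
      ((AddCircle.toCircle (t 0) : ℂ), (AddCircle.toCircle (t 1) : ℂ))) =
      {z : ℂ | ‖z‖ = 1} ×ˢ {u : ℂ | ‖u‖ = 1} := by
  ext ⟨z, u⟩
  constructor
  · rintro ⟨t, ht⟩
    simp only [Prod.mk.injEq] at ht
    rw [← ht.1, ← ht.2]
    exact ⟨Circle.norm_coe _, Circle.norm_coe _⟩
  · rintro ⟨hz, hu⟩
    obtain ⟨s, hs⟩ := AddCircle.toCircle_surjective one_ne_zero ⟨z, mem_sphere_zero_iff_norm.2 hz⟩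
    obtain ⟨t, ht⟩ := AddCircle.toCircle_surjective one_ne_zero ⟨u, mem_sphere_zero_iff_norm.2 hu⟩
    exact ⟨![s, t], by simp [hs, ht]⟩

theorem toCircle_zsmul_coe_div_two_pi (n : ℤ) (a : ℝ) :
    (AddCircle.toCircle (n • ((a / (2 * π) : ℝ) : UnitAddCircle)) : ℂ) =
      Complex.exp (n * a * I) := by
  have hπ : (π : ℂ) ≠ 0 := ofReal_ne_zero.2 pi_ne_zero
  rw [fourier_coe_apply']
  congr 1
  push_cast
  field_simp

theorem eq_zero_of_sum_eq_int_of_linearIndependent {α β : ℝ}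
    (hind : LinearIndependent ℚ ![α, β, π]) (n : Fin 2 → ℤ) (k : ℤ)
    (h : ∑ i, n i * ![α / (2 * π), β / (2 * π)] i = k) : n = 0 := by
  have hcomb : ((n 0 : ℚ) : ℝ) * α + ((n 1 : ℚ) : ℝ) * β + ((-2 * k : ℤ) : ℚ) * π = 0 := by
    simp only [Fin.sum_univ_two, Matrix.cons_val_zero, Matrix.cons_val_one] at h
    field_simp at h
    push_cast
    linear_combination h
  have hzero := Fintype.linearIndependent_iff.1 hind ![(n 0 : ℚ), (n 1 : ℚ), ((-2 * k : ℤ) : ℚ)]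
    (by simpa [Fin.sum_univ_three, Rat.smul_def] using hcomb)
  ext i
  fin_cases i
  · simpa using hzero 0
  · simpa using hzero 1

/-- The orbit {(e^{inα}, e^{inβ})} is dense in the torus when α, β, π are
ℚ-linearly independent. -/
theorem orbit_dense_in_torus (α β : ℝ)
    (hind : LinearIndependent ℚ ![α, β, π]) :
    closure {p : ℂ × ℂ | ∃ n : ℤ,
        p = (Complex.exp ((n : ℂ) * (α : ℂ) * Complex.I),
             Complex.exp ((n : ℂ) * (β : ℂ) * Complex.I))} =
      {z : ℂ | ‖z‖ = 1} ×ˢ {u : ℂ | ‖u‖ = 1} := by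
  set θ : Fin 2 → ℝ := ![α / (2 * π), β / (2 * π)]
  set Φ : UnitAddTorus (Fin 2) → ℂ × ℂ := fun t =>
    ((AddCircle.toCircle (t 0) : ℂ), (AddCircle.toCircle (t 1) : ℂ))
  have hΦ : Continuous Φ := by fun_prop
  have horbit : {p : ℂ × ℂ | ∃ n : ℤ,
        p = (Complex.exp ((n : ℂ) * (α : ℂ) * Complex.I),
             Complex.exp ((n : ℂ) * (β : ℂ) * Complex.I))} =
      Φ '' AddSubgroup.zmultiples (fun i => (θ i : UnitAddCircle)) := by
    ext p
    simp only [mem_ofPred_eq, SetLike.mem_coe, AddSubgroup.mem_zmultiples_iff, mem_image,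
      exists_exists_eq_and]
    refine exists_congr fun n => ?_
    simp only [Φ, θ, Pi.smul_apply, Matrix.cons_val_zero, Matrix.cons_val_one,
      toCircle_zsmul_coe_div_two_pi, eq_comm]
  have hdense := UnitAddTorus.dense_zmultiples_coe
    (eq_zero_of_sum_eq_int_of_linearIndependent hind)
  rw [horbit, hΦ.isClosedMap.closure_image_eq_of_continuous hΦ, hdense.closure_eq, image_univ,
    range_toCircle_pair]
end

section
/- Let α, β ∈ (0, 2π) with α, β, π linearly independent over ℚ, and let ρ = (δ_α + δ_β)/2 be a measure on the circle group 𝕋. Then the closure of the set of Fourier–Stieltjes coefficients {ρ̂(n) : n ∈ ℤ} equals the closed unit disk, where ρ̂(n) = (e^{−inα} + e^{−inβ})/2. -/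
/-!
`ρ̂(-n)` is the image of `n • (α, β)` in the torus `(ℝ/2πℤ)²` under the continuous map
`(x, y) ↦ (e^{ix} + e^{iy})/2`, whose range is the closed unit disk, so it suffices that this
orbit is dense (Kronecker). Its closure `H` is a closed subgroup of the torus projecting onto the
first factor. If `H` misses part of the vertical circle, its vertical fibre is a proper closed
subgroup, hence finite, of some exponent `m`, and `(x, y) ↦ (x, m y)` maps `H` onto the closed
graph of a continuous endomorphism of the circle. That endomorphism is `y ↦ n y`, because a
continuous unitary character of the circle has a nonzero Fourier coefficient (Parseval), and
translation invariance forces it to be the corresponding exponential. Then `n α - m β ∈ 2πℤ`,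
contradicting the independence of `α, β, π`.
-/

open Complex Real Set MeasureTheory

theorem continuous_of_isClosed_graph {X Y : Type*} [TopologicalSpace X] [TopologicalSpace Y]
    [CompactSpace Y] {f : X → Y} (hf : IsClosed {p : X × Y | f p.1 = p.2}) : Continuous f := by
  refine continuous_iff_isClosed.2 fun s hs => ?_
  have : f ⁻¹' s = Prod.fst '' ({p : X × Y | f p.1 = p.2} ∩ Prod.snd ⁻¹' s) := by
    ext x; simp
  rw [this]
  exact isClosedMap_fst_of_compactSpace _ (hf.inter (hs.preimage continuous_snd))

theorem exists_mk_mem_of_dense_image_fst {X Y : Type*} [TopologicalSpace X] [TopologicalSpace Y]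
    [CompactSpace Y] {s : Set (X × Y)} (hs : IsClosed s) (hd : Dense (Prod.fst '' s)) (x : X) :
    ∃ y, (x, y) ∈ s := by
  have hfst : Prod.fst '' s = univ := by
    rw [← (isClosedMap_fst_of_compactSpace _ hs).closure_eq, hd.closure_eq]
  obtain ⟨p, hp, rfl⟩ : x ∈ Prod.fst '' s := hfst ▸ mem_univ x
  exact ⟨p.2, hp⟩

theorem DenseRange.closure_range_comp {ι X Y : Type*} [TopologicalSpace X] [CompactSpace X]
    [TopologicalSpace Y] [T2Space Y] {f : X → Y} {g : ι → X} (hg : DenseRange g)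
    (hf : Continuous f) : closure (range (f ∘ g)) = range f := by
  refine subset_antisymm (closure_minimal (range_comp_subset_range g f)
    (isCompact_range hf).isClosed) ?_
  rw [range_comp]
  exact hf.range_subset_closure_image_dense hg

theorem AddSubgroup.eq_top_of_forall_exists_mk_mem {G G' : Type*} [AddGroup G] [AddGroup G']
    {H : AddSubgroup (G × G')} (hfst : ∀ x, ∃ y, (x, y) ∈ H) (hsnd : ∀ y, (0, y) ∈ H) :
    H = ⊤ := by
  refine eq_top_iff.2 fun ⟨x, y⟩ _ => ?_
  obtain ⟨y', hy'⟩ := hfst x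
  simpa using H.add_mem hy' (hsnd (-y' + y))

theorem range_circle_midpoint :
    range (fun p : Circle × Circle => ((p.1 : ℂ) + p.2) / 2) = Metric.closedBall 0 1 := by
  refine subset_antisymm ?_ fun w hw => ?_
  · rintro - ⟨⟨u, v⟩, rfl⟩
    rw [mem_closedBall_zero_iff, norm_div, Complex.norm_two]
    linarith [norm_add_le (u : ℂ) v, Circle.norm_coe u, Circle.norm_coe v]
  · rw [mem_closedBall_zero_iff] at hw
    set d := Real.arccos ‖w‖
    refine ⟨(Circle.exp (w.arg + d), Circle.exp (w.arg - d)), ?_⟩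
    have hcos : Real.cos d = ‖w‖ := Real.cos_arccos (by linarith [norm_nonneg w]) hw
    calc ((Circle.exp (w.arg + d) : ℂ) + Circle.exp (w.arg - d)) / 2
        = Complex.cos d * exp (w.arg * I) := by
          simp only [Circle.coe_exp, exp_mul_I]
          push_cast
          rw [Complex.cos_add, Complex.sin_add, Complex.cos_sub, Complex.sin_sub]
          ring
      _ = w := by rw [← ofReal_cos, hcos, norm_mul_exp_arg_mul_I]

namespace AddCircle

theorem surjective_toCircle {T : ℝ} (hT : T ≠ 0) :
    Function.Surjective (@toCircle T) :=
  fun z => ⟨(homeomorphCircle hT).symm z, by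
    rw [← homeomorphCircle_apply hT, Homeomorph.apply_symm_apply]⟩

theorem toCircle_zsmul_coe_two_pi (n : ℤ) (x : ℝ) :
    (toCircle (n • (x : AddCircle (2 * π))) : ℂ) = exp (n * x * I) := by
  rw [← coe_zsmul, toCircle_apply_mk, Circle.coe_exp]
  field_simp
  push_cast
  ring_nf

theorem eq_zero_of_zsmul_add_zsmul_eq_zero {α β : ℝ}
    (hind : LinearIndependent ℚ ![α, β, π]) {p q : ℤ}
    (h : p • (α : AddCircle (2 * π)) + q • (β : AddCircle (2 * π)) = 0) :
    p = 0 ∧ q = 0 := by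
  rw [← coe_zsmul, ← coe_zsmul, ← coe_add, coe_eq_zero_iff] at h
  obtain ⟨k, hk⟩ := h
  have hcomb := Fintype.linearIndependent_iff.1 hind ![(p : ℚ), q, -2 * k] (by
    simp only [Fin.sum_univ_three, Matrix.cons_val_zero, Matrix.cons_val_one,
      Matrix.cons_val_two, Matrix.head_cons, Matrix.tail_cons, Rat.smul_def]
    simp only [zsmul_eq_mul] at hk
    push_cast
    linarith)
  exact ⟨by simpa using hcomb 0, by simpa using hcomb 1⟩

variable {T : ℝ} [Fact (0 < T)]

theorem exists_fourierCoeff_ne_zero {F : C(AddCircle T, ℂ)} (hF : ∀ x, ‖F x‖ = 1) :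
    ∃ n, fourierCoeff F n ≠ 0 := by
  by_contra! h
  have hparseval := tsum_sq_fourierCoeff (ContinuousMap.toLp (E := ℂ) 2 haarAddCircle ℂ F)
  simp only [fourierCoeff_toLp, h, norm_zero] at hparseval
  rw [integral_congr_ae (g := fun _ => 1)
    ((ContinuousMap.coeFn_toLp (p := 2) haarAddCircle (𝕜 := ℂ) F).mono
      fun t ht => by rw [ht, hF, one_pow])] at hparseval
  simp at hparseval

theorem exists_eq_fourier_of_map_add {F : C(AddCircle T, ℂ)} (hF : ∀ x, ‖F x‖ = 1)
    (hadd : ∀ x y, F (x + y) = F x * F y) : ∃ n, ∀ x, F x = fourier n x := by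
  obtain ⟨n, hn⟩ := exists_fourierCoeff_ne_zero hF
  refine ⟨n, fun y => ?_⟩
  have htrans : fourierCoeff F n = (fourier (-n) y * F y) * fourierCoeff F n := by
    calc fourierCoeff F n
        = ∫ t, fourier (-n) (t + y) • F (t + y) ∂haarAddCircle :=
          (integral_add_right_eq_self (fun t => fourier (-n) t • F t) y).symm
      _ = ∫ t, (fourier (-n) y * F y) • (fourier (-n) t • F t) ∂haarAddCircle := by
          congr 1 with t
          simp only [fourier_apply, smul_add, toCircle_add, Circle.coe_mul, hadd, smul_eq_mul]
          ring
      _ = (fourier (-n) y * F y) * fourierCoeff F n := integral_smul _ _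
  have hunit : fourier (-n) y * F y = 1 := by
    simpa using mul_right_cancel₀ hn (htrans.symm.trans (one_mul _).symm)
  calc F y = fourier n y * (fourier (-n) y * F y) := by
        rw [← mul_assoc, ← fourier_add, add_neg_cancel, fourier_zero, one_mul]
    _ = fourier n y := by rw [hunit, mul_one]

theorem exists_eq_zsmul_of_continuous {σ : AddCircle T →+ AddCircle T} (hσ : Continuous σ) :
    ∃ n : ℤ, ∀ x, σ x = n • x := by
  let F : C(AddCircle T, ℂ) := ⟨fun x => toCircle (σ x), by fun_prop⟩
  obtain ⟨n, hn⟩ := exists_eq_fourier_of_map_add (F := F) (fun x => Circle.norm_coe _)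
    (fun x y => by simp [F, toCircle_add])
  refine ⟨n, fun x => injective_toCircle (Fact.out : 0 < T).ne' (Subtype.ext ?_)⟩
  simpa [F, fourier_apply] using hn x

theorem exists_nsmul_eq_zero_of_isClosed_ne_top {K : AddSubgroup (AddCircle T)}
    (hK : IsClosed (K : Set (AddCircle T))) (hKtop : K ≠ ⊤) :
    ∃ m : ℕ, m ≠ 0 ∧ ∀ y ∈ K, m • y = 0 := by
  have hKdense : ¬Dense (K : Set (AddCircle T)) := fun hd =>
    hKtop (SetLike.coe_injective (by simpa [hK.closure_eq] using hd.closure_eq))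
  rw [dense_addSubgroup_iff_ne_zmultiples] at hKdense
  push Not at hKdense
  obtain ⟨a, ha, rfl⟩ := hKdense
  refine ⟨addOrderOf a, ha, fun y hy => ?_⟩
  obtain ⟨k, rfl⟩ := AddSubgroup.mem_zmultiples_iff.1 hy
  rw [smul_comm, addOrderOf_nsmul_eq_zero, smul_zero]

theorem exists_nsmul_snd_eq_zsmul_fst {H : AddSubgroup (AddCircle T × AddCircle T)}
    (hH : IsClosed (H : Set (AddCircle T × AddCircle T))) (hfst : ∀ x, ∃ y, (x, y) ∈ H)
    {m : ℕ} (hm : ∀ y, (0, y) ∈ H → m • y = 0) :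
    ∃ n : ℤ, ∀ p ∈ H, m • p.2 = n • p.1 := by
  let f : H →+ AddCircle T × AddCircle T :=
    ((AddMonoidHom.id _).prodMap (nsmulAddMonoidHom m)).comp H.subtype
  have hf : Continuous f :=
    (continuous_fst.prodMk ((continuous_nsmul m).comp continuous_snd)).comp continuous_subtype_val
  have : CompactSpace H := isCompact_iff_compactSpace.mp hH.isCompact
  obtain ⟨σ, hσ⟩ := AddMonoidHom.exists_range_eq_graph (f := f)
    (fun x => by obtain ⟨y, hy⟩ := hfst x; exact ⟨⟨(x, y), hy⟩, rfl⟩)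
    (fun ⟨⟨x₁, y₁⟩, h₁⟩ ⟨⟨x₂, y₂⟩, h₂⟩ hx => by
      obtain rfl : x₁ = x₂ := hx
      have := hm _ (by simpa using H.sub_mem h₁ h₂)
      rwa [nsmul_sub, sub_eq_zero] at this)
  have hσcont : Continuous σ := by
    refine continuous_of_isClosed_graph ?_
    have := (isCompact_range hf).isClosed
    rwa [← AddMonoidHom.coe_range, hσ] at this
  obtain ⟨n, hn⟩ := exists_eq_zsmul_of_continuous hσcont
  refine ⟨n, fun p hp => ?_⟩
  have : f ⟨p, hp⟩ ∈ σ.graph := hσ ▸ ⟨⟨p, hp⟩, rfl⟩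
  rw [AddMonoidHom.mem_graph, hn] at this
  exact this.symm

theorem denseRange_zsmul_prod {a b : AddCircle T}
    (hab : ∀ p q : ℤ, p • a + q • b = 0 → p = 0 ∧ q = 0) :
    DenseRange fun n : ℤ => n • (a, b) := by
  let H := (AddSubgroup.zmultiples (a, b)).topologicalClosure
  have hH : IsClosed (H : Set (AddCircle T × AddCircle T)) :=
    AddSubgroup.isClosed_topologicalClosure _
  have horbit : ∀ n : ℤ, n • (a, b) ∈ H := fun n =>
    AddSubgroup.le_topologicalClosure _ (AddSubgroup.zsmul_mem_zmultiples _ n)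
  have ha : DenseRange fun n : ℤ => n • a := by
    refine denseRange_zsmul_iff.2 (addOrderOf_eq_zero_iff'.2 fun n hn hna => hn.ne' ?_)
    exact_mod_cast (hab n 0 (by simpa using hna)).1
  have hfst : ∀ x, ∃ y, (x, y) ∈ H := exists_mk_mem_of_dense_image_fst hH
    (ha.mono (range_subset_iff.2 fun n => ⟨_, horbit n, rfl⟩))
  suffices H = ⊤ by
    rw [DenseRange, dense_iff_closure_eq, ← AddSubgroup.coe_zmultiples,
      ← AddSubgroup.topologicalClosure_coe]
    exact congrArg SetLike.coe this
  by_cases hsnd : ∀ y, (0, y) ∈ H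
  · exact AddSubgroup.eq_top_of_forall_exists_mk_mem hfst hsnd
  · let K := H.comap (AddMonoidHom.inr (AddCircle T) (AddCircle T))
    have hK : IsClosed (K : Set (AddCircle T)) :=
      hH.preimage (continuous_const.prodMk continuous_id)
    obtain ⟨m, hm, hmK⟩ := exists_nsmul_eq_zero_of_isClosed_ne_top hK
      fun hKtop => hsnd fun y => (hKtop ▸ AddSubgroup.mem_top y : y ∈ K)
    obtain ⟨n, hn⟩ := exists_nsmul_snd_eq_zsmul_fst hH hfst (m := m) hmK
    refine absurd (hab n (-m) ?_).2 (by simpa using hm)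
    have hmb : m • b = n • a := hn (a, b) (by simpa using horbit 1)
    rw [neg_zsmul, natCast_zsmul, hmb, add_neg_cancel]

end AddCircle

theorem fourier_range_dense_in_disk_general (α β : ℝ)
    (hind : LinearIndependent ℚ ![α, β, π]) :
    closure {w : ℂ | ∃ n : ℤ,
        w = (Complex.exp (-((n : ℂ) * (α : ℂ)) * Complex.I) +
             Complex.exp (-((n : ℂ) * (β : ℂ)) * Complex.I)) / 2} =
      Metric.closedBall (0 : ℂ) 1 := by
  have : Fact (0 < 2 * π) := ⟨two_pi_pos⟩
  let mean : Circle × Circle → ℂ := fun p => ((p.1 : ℂ) + p.2) / 2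
  let orbit : ℤ → AddCircle (2 * π) × AddCircle (2 * π) := fun n =>
    n • ((α : AddCircle (2 * π)), (β : AddCircle (2 * π)))
  have horbit : DenseRange orbit := AddCircle.denseRange_zsmul_prod fun _ _ =>
    AddCircle.eq_zero_of_zsmul_add_zsmul_eq_zero hind
  have hsurj := AddCircle.surjective_toCircle two_pi_pos.ne'
  have hclosure : closure (range
      (((mean ∘ Prod.map AddCircle.toCircle AddCircle.toCircle) ∘ orbit) ∘ Neg.neg)) =
      Metric.closedBall 0 1 := by
    rw [neg_surjective.range_comp, horbit.closure_range_comp (by fun_prop), range_comp,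
      (hsurj.prodMap hsurj).range_eq, image_univ, range_circle_midpoint]
  convert hclosure using 2
  ext w
  simp only [mem_ofPred_eq, mem_range, Function.comp_apply, Prod.map_apply, mean, orbit,
    Prod.smul_mk, AddCircle.toCircle_zsmul_coe_two_pi, Int.cast_neg, neg_mul, eq_comm]

/-- The Fourier–Stieltjes coefficients ρ̂(n) = (e^{-inα}+e^{-inβ})/2 of
ρ = (δ_α+δ_β)/2 are dense in the closed unit disk. -/
theorem fourier_range_dense_in_disk (α β : ℝ)
    (hα : α ∈ Set.Ioo (0 : ℝ) (2 * π)) (hβ : β ∈ Set.Ioo (0 : ℝ) (2 * π))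
    (hind : LinearIndependent ℚ ![α, β, π]) :
    closure {w : ℂ | ∃ n : ℤ,
        w = (Complex.exp (-((n : ℂ) * (α : ℂ)) * Complex.I) +
             Complex.exp (-((n : ℂ) * (β : ℂ)) * Complex.I)) / 2} =
      Metric.closedBall (0 : ℂ) 1 :=
  fourier_range_dense_in_disk_general α β hind
end

section
/- Let α, β ∈ (0, 2π) with α, β, π linearly independent over ℚ, and set ρ̂(n) = (e^{−inα} + e^{−inβ})/2. Then the closure of {ρ̂(n) : n ∈ 2ℤ} (values at even integers) equals the closed unit disk. -/
/-!
With `a = α / π` and `b = β / π`, the set is the image of the subgroup `ℤ • (a, b) + ℤ²` of `ℝ²`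
under the continuous map `(x, y) ↦ (e^{-2πix} + e^{-2πiy}) / 2`, whose range is the closed unit
disk: `z = ‖z‖ e^{iθ}` with `‖z‖ = cos ψ` is the mean of `e^{i(θ + ψ)}` and `e^{i(θ - ψ)}`.
So it suffices that this subgroup is dense (Kronecker). Its closure `H` contains infinitely many
points of `[0, 1]²`, hence arbitrarily small nonzero vectors, hence (normalising and passing to a
limit direction) a whole line `ℝ • u`. The functional `w ↦ det (w, u)` maps `H` onto a subgroup of
`ℝ` containing `u₂`, `-u₁` and `u₂ a - u₁ b`; by the independence of `1, a, b` it is not cyclic,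
hence dense, and since `H` is closed and contains the kernel `ℝ • u`, `H = ℝ²`.
-/

open Complex Real Filter Topology

theorem AddSubgroup.zero_mem_closure_diff_zero_of_infinite_inter_compact {E : Type*}
    [SeminormedAddCommGroup E] (H : AddSubgroup E) {K : Set E} (hK : IsCompact K)
    (hHK : ((H : Set E) ∩ K).Infinite) : (0 : E) ∈ _root_.closure ((H : Set E) \ {0}) := by
  rw [Metric.mem_closure_iff]
  intro ε hε
  obtain ⟨t, -, ht, hKt⟩ := finite_cover_balls_of_compact hK (half_pos hε)
  obtain ⟨c, -, hc⟩ : ∃ c ∈ t, ((H : Set E) ∩ Metric.ball c (ε / 2)).Infinite := by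
    by_contra! h
    refine hHK ((ht.biUnion fun c hc => h c hc).subset ?_)
    rintro x ⟨hxH, hxK⟩
    obtain ⟨c, hct, hxc⟩ := Set.mem_iUnion₂.1 (hKt hxK)
    exact Set.mem_iUnion₂.2 ⟨c, hct, hxH, hxc⟩
  obtain ⟨x, ⟨hxH, hxc⟩, y, ⟨hyH, hyc⟩, hxy⟩ := hc.nontrivial
  refine ⟨x - y, ⟨H.sub_mem hxH hyH, sub_ne_zero.2 hxy⟩, ?_⟩
  calc dist 0 (x - y) = dist x y := by rw [dist_zero_left, dist_eq_norm]
    _ ≤ dist x c + dist y c := dist_triangle_right _ _ _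
    _ < ε / 2 + ε / 2 := add_lt_add hxc hyc
    _ = ε := add_halves ε

theorem tendsto_floor_div_mul_nhdsGT_zero (t : ℝ) :
    Tendsto (fun r : ℝ => ⌊t / r⌋ * r) (𝓝[>] 0) (𝓝 t) := by
  have hlower : Tendsto (fun r : ℝ => t - r) (𝓝[>] 0) (𝓝 t) := by
    simpa using (tendsto_const_nhds.sub tendsto_id : Tendsto (fun r : ℝ => t - r) (𝓝 0) _).mono_left
      nhdsWithin_le_nhds
  refine tendsto_of_tendsto_of_tendsto_of_le_of_le' hlower tendsto_const_nhds ?_ ?_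
  · filter_upwards [self_mem_nhdsWithin] with r (hr : 0 < r)
    have := mul_lt_mul_of_pos_right (Int.lt_floor_add_one (t / r)) hr
    rw [div_mul_cancel₀ t hr.ne'] at this
    linarith
  · filter_upwards [self_mem_nhdsWithin] with r (hr : 0 < r)
    calc ⌊t / r⌋ * r ≤ t / r * r := mul_le_mul_of_nonneg_right (Int.floor_le _) hr.le
      _ = t := div_mul_cancel₀ t hr.ne'

theorem AddSubgroup.exists_forall_smul_mem_of_zero_mem_closure {E : Type*} [NormedAddCommGroup E]
    [NormedSpace ℝ E] [ProperSpace E] {H : AddSubgroup E} (hH : IsClosed (H : Set E))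
    (h0 : (0 : E) ∈ _root_.closure ((H : Set E) \ {0})) : ∃ u : E, u ≠ 0 ∧ ∀ t : ℝ, t • u ∈ H := by
  obtain ⟨x, hxH, hx0⟩ := mem_closure_iff_seq_limit.1 h0
  have hx_ne : ∀ k, ‖x k‖ ≠ 0 := fun k => norm_ne_zero_iff.2 (hxH k).2
  have hsphere : ∀ k, ‖x k‖⁻¹ • x k ∈ Metric.sphere (0 : E) 1 := fun k => by
    simp [norm_smul, hx_ne k]
  obtain ⟨u, hu, φ, hφ, hlim⟩ := (isCompact_sphere (0 : E) 1).tendsto_subseq hsphere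
  refine ⟨u, ne_zero_of_mem_unit_sphere ⟨u, hu⟩, fun t => ?_⟩
  have hnorm : Tendsto (fun k => ‖x (φ k)‖) atTop (𝓝[>] 0) :=
    tendsto_nhdsWithin_iff.2 ⟨by simpa using (hx0.comp hφ.tendsto_atTop).norm,
      Eventually.of_forall fun k => (norm_nonneg _).lt_of_ne' (hx_ne _)⟩
  have hmem : ∀ k, (⌊t / ‖x (φ k)‖⌋ * ‖x (φ k)‖) • (‖x (φ k)‖⁻¹ • x (φ k)) ∈ H := fun k => by
    rw [smul_smul, mul_assoc, mul_inv_cancel₀ (hx_ne _), mul_one, Int.cast_smul_eq_zsmul]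
    exact H.zsmul_mem (hxH _).1 _
  exact hH.mem_of_tendsto (((tendsto_floor_div_mul_nhdsGT_zero t).comp hnorm).smul hlim)
    (Eventually.of_forall hmem)

theorem AddSubgroup.eq_top_of_dense_map {E F : Type*} [AddGroup E] [TopologicalSpace E]
    [AddGroup F] [TopologicalSpace F] {H : AddSubgroup E} (hH : IsClosed (H : Set E)) {f : E →+ F}
    (hfc : Continuous f) (hfo : IsOpenMap f) (hker : f.ker ≤ H) (hdense : Dense (H.map f : Set F)) :
    H = ⊤ := by
  have hsat : f ⁻¹' (H.map f : Set F) = H := by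
    rw [← AddSubgroup.coe_comap, AddSubgroup.comap_map_eq, sup_eq_left.2 hker]
  rw [← AddSubgroup.coe_eq_univ, ← hH.closure_eq, ← hsat,
    ← hfo.preimage_closure_eq_closure_preimage hfc, hdense.closure_eq, Set.preimage_univ]

def detWith (u : ℝ × ℝ) : ℝ × ℝ →L[ℝ] ℝ :=
  u.2 • ContinuousLinearMap.fst ℝ ℝ ℝ - u.1 • ContinuousLinearMap.snd ℝ ℝ ℝ

@[simp]
theorem detWith_apply (u w : ℝ × ℝ) : detWith u w = u.2 * w.1 - u.1 * w.2 := by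
  simp [detWith]

theorem fst_sq_add_snd_sq_ne_zero {u : ℝ × ℝ} (hu : u ≠ 0) : u.1 ^ 2 + u.2 ^ 2 ≠ 0 := by
  contrapose! hu
  ext <;> simp only [Prod.fst_zero, Prod.snd_zero] <;> nlinarith [sq_nonneg u.1, sq_nonneg u.2]

theorem detWith_surjective {u : ℝ × ℝ} (hu : u ≠ 0) : Function.Surjective (detWith u) := by
  intro r
  refine ⟨(r / (u.1 ^ 2 + u.2 ^ 2)) • (u.2, -u.1), ?_⟩
  have := fst_sq_add_snd_sq_ne_zero hu
  simp only [detWith_apply, Prod.smul_mk, smul_eq_mul]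
  field_simp
  ring

theorem exists_eq_smul_of_detWith_eq_zero {u w : ℝ × ℝ} (hu : u ≠ 0) (hw : detWith u w = 0) :
    ∃ t : ℝ, t • u = w := by
  have := fst_sq_add_snd_sq_ne_zero hu
  rw [detWith_apply] at hw
  refine ⟨(u.1 * w.1 + u.2 * w.2) / (u.1 ^ 2 + u.2 ^ 2), Prod.ext ?_ ?_⟩ <;>
    simp only [Prod.smul_fst, Prod.smul_snd, smul_eq_mul] <;> field_simp
  · linear_combination (-u.2) * hw
  · linear_combination u.1 * hw

theorem AddSubgroup.dense_of_mem_of_forall_int_relation {G : AddSubgroup ℝ} {a b p q : ℝ}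
    (hab : ∀ P Q R : ℤ, P * a + Q * b = R → P = 0 ∧ Q = 0) (hpq : (p, q) ≠ 0) (hp : p ∈ G)
    (hq : q ∈ G) (hpaqb : p * a + q * b ∈ G) : Dense (G : Set ℝ) := by
  refine (G.dense_or_cyclic).resolve_right ?_
  rintro ⟨g, rfl⟩
  simp only [AddSubgroup.mem_closure_singleton, zsmul_eq_mul] at hp hq hpaqb
  obtain ⟨P, rfl⟩ := hp
  obtain ⟨Q, rfl⟩ := hq
  obtain ⟨R, hR⟩ := hpaqb
  have hrel : (P * a + Q * b - R) * g = 0 := by linear_combination -hR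
  rcases mul_eq_zero.1 hrel with hPQR | rfl
  · obtain ⟨rfl, rfl⟩ := hab P Q R (by linarith)
    simp at hpq
  · simp at hpq

def kroneckerSubgroup (a b : ℝ) : AddSubgroup (ℝ × ℝ) where
  carrier := {x | ∃ n p q : ℤ, x = (n * a + p, n * b + q)}
  zero_mem' := ⟨0, 0, 0, by ext <;> simp⟩
  add_mem' := by
    rintro _ _ ⟨n, p, q, rfl⟩ ⟨n', p', q', rfl⟩
    refine ⟨n + n', p + p', q + q', ?_⟩
    push_cast
    ext <;> simp only [Prod.fst_add, Prod.snd_add] <;> ring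
  neg_mem' := by
    rintro _ ⟨n, p, q, rfl⟩
    refine ⟨-n, -p, -q, ?_⟩
    push_cast
    ext <;> simp only [Prod.fst_neg, Prod.snd_neg] <;> ring

theorem mk_mem_kroneckerSubgroup (a b : ℝ) (n p q : ℤ) :
    ((n * a + p, n * b + q) : ℝ × ℝ) ∈ kroneckerSubgroup a b :=
  ⟨n, p, q, rfl⟩

theorem dense_kroneckerSubgroup {a b : ℝ}
    (hab : ∀ P Q R : ℤ, P * a + Q * b = R → P = 0 ∧ Q = 0) :
    Dense (kroneckerSubgroup a b : Set (ℝ × ℝ)) := by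
  set S := kroneckerSubgroup a b
  set H := S.topologicalClosure
  have hfract_inj : Function.Injective fun n : ℤ => (Int.fract (n * a), Int.fract (n * b)) := by
    intro m n hmn
    obtain ⟨z, hz⟩ := Int.fract_eq_fract.1 (congrArg Prod.fst hmn)
    have := (hab (m - n) 0 z (by push_cast; linarith)).1
    omega
  have hinf : ((S : Set (ℝ × ℝ)) ∩ Set.Icc 0 1 ×ˢ Set.Icc 0 1).Infinite := by
    refine Set.infinite_of_injective_forall_mem hfract_inj fun n => ⟨?_, ?_, ?_⟩
    · simpa [Int.fract, sub_eq_add_neg] using mk_mem_kroneckerSubgroup a b n (-⌊n * a⌋) (-⌊n * b⌋)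
    · exact ⟨Int.fract_nonneg _, (Int.fract_lt_one _).le⟩
    · exact ⟨Int.fract_nonneg _, (Int.fract_lt_one _).le⟩
  have hacc : (0 : ℝ × ℝ) ∈ closure ((H : Set (ℝ × ℝ)) \ {0}) :=
    closure_mono (Set.sdiff_subset_sdiff_left S.le_topologicalClosure) <|
      S.zero_mem_closure_diff_zero_of_infinite_inter_compact (isCompact_Icc.prod isCompact_Icc) hinf
  obtain ⟨u, hu, hline⟩ :=
    H.exists_forall_smul_mem_of_zero_mem_closure S.isClosed_topologicalClosure hacc
  have hker : (detWith u).toLinearMap.toAddMonoidHom.ker ≤ H := fun w hw => by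
    obtain ⟨t, rfl⟩ := exists_eq_smul_of_detWith_eq_zero hu hw
    exact hline t
  set G := H.map (detWith u).toLinearMap.toAddMonoidHom
  have hmem (n p q : ℤ) : detWith u (n * a + p, n * b + q) ∈ G :=
    ⟨_, S.le_topologicalClosure (mk_mem_kroneckerSubgroup a b n p q), rfl⟩
  have hdense := AddSubgroup.dense_of_mem_of_forall_int_relation (G := G) (p := u.2) (q := -u.1) hab
    (by simpa [Prod.ext_iff, and_comm] using hu)
    (by simpa using hmem 0 1 0) (by simpa using hmem 0 0 1)
    (by convert hmem 1 0 0 using 1; simp; ring)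
  have hH : H = ⊤ := AddSubgroup.eq_top_of_dense_map S.isClosed_topologicalClosure
    (detWith u).continuous ((detWith u).isOpenMap (detWith_surjective hu)) hker hdense
  rw [dense_iff_closure_eq, ← S.topologicalClosure_coe]
  exact congrArg SetLike.coe hH

theorem LinearIndependent.eq_zero_of_int_relation {x y z : ℝ} (h : LinearIndependent ℚ ![x, y, z])
    {P Q R : ℤ} (hPQR : P * x + Q * y = R * z) : P = 0 ∧ Q = 0 := by
  have hsum : ∑ i, ![(P : ℚ), Q, -R] i • ![x, y, z] i = 0 := by
    simp only [Fin.sum_univ_three, Matrix.cons_val_zero, Matrix.cons_val_one, Matrix.cons_val_two,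
      Matrix.head_cons, Matrix.tail_cons, Rat.smul_def]
    push_cast
    linarith
  have hcoeff := Fintype.linearIndependent_iff.1 h _ hsum
  exact ⟨by simpa using hcoeff 0, by simpa using hcoeff 1⟩

theorem exists_exp_add_exp_div_two_eq {z : ℂ} (hz : ‖z‖ ≤ 1) :
    ∃ x y : ℝ, (exp (x * I) + exp (y * I)) / 2 = z := by
  set θ := arg z
  set ψ := Real.arccos ‖z‖
  refine ⟨θ + ψ, θ - ψ, ?_⟩
  have hcos : Complex.cos ψ = ‖z‖ := by
    rw [← ofReal_cos, Real.cos_arccos (by linarith [norm_nonneg z]) hz]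
  calc (exp (↑(θ + ψ) * I) + exp (↑(θ - ψ) * I)) / 2 = ‖z‖ * exp (θ * I) := by
        rw [← hcos, Complex.cos, ofReal_add, ofReal_sub, add_mul, sub_mul, sub_eq_add_neg,
          Complex.exp_add, Complex.exp_add, ← neg_mul]
        ring
    _ = z := norm_mul_exp_arg_mul_I z

theorem range_exp_add_exp_div_two :
    Set.range (fun w : ℝ × ℝ => (exp (w.1 * I) + exp (w.2 * I)) / 2) = Metric.closedBall 0 1 := by
  ext z
  constructor
  · rintro ⟨w, rfl⟩
    rw [mem_closedBall_zero_iff, norm_div, RCLike.norm_ofNat, div_le_one two_pos]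
    calc _ ≤ ‖exp (w.1 * I)‖ + ‖exp (w.2 * I)‖ := norm_add_le _ _
      _ = 2 := by rw [norm_exp_ofReal_mul_I, norm_exp_ofReal_mul_I]; norm_num
  · intro hz
    obtain ⟨x, y, h⟩ := exists_exp_add_exp_div_two_eq (mem_closedBall_zero_iff.1 hz)
    exact ⟨(x, y), h⟩

theorem exp_neg_two_pi_mul_int_add_mul_I (γ : ℝ) (n p : ℤ) :
    exp (↑(-(2 * π) * (n * (γ / π) + p)) * I) = exp (-(((2 * n : ℤ) : ℂ) * γ) * I) := by
  have hπ : (π : ℂ) ≠ 0 := ofReal_ne_zero.2 pi_ne_zero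
  have hsplit : ↑(-(2 * π) * (n * (γ / π) + p)) * I
      = -(((2 * n : ℤ) : ℂ) * γ) * I + ((-p : ℤ) : ℂ) * (2 * π * I) := by
    push_cast
    field_simp
    ring
  rw [hsplit, Complex.exp_add, exp_int_mul_two_pi_mul_I, mul_one]

theorem fourier_range_even_dense_in_disk_general (α β : ℝ)
    (hind : LinearIndependent ℚ ![α, β, π]) :
    closure {w : ℂ | ∃ n : ℤ,
        w = (Complex.exp (-(((2 * n : ℤ) : ℂ) * (α : ℂ)) * Complex.I) +
             Complex.exp (-(((2 * n : ℤ) : ℂ) * (β : ℂ)) * Complex.I)) / 2} =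
      Metric.closedBall (0 : ℂ) 1 := by
  set F : ℝ × ℝ → ℂ :=
    (fun w : ℝ × ℝ => (exp (w.1 * I) + exp (w.2 * I)) / 2) ∘ fun w => -(2 * π) • w
  have hdense := dense_kroneckerSubgroup (a := α / π) (b := β / π) fun P Q R h =>
    hind.eq_zero_of_int_relation (by field_simp at h; linarith)
  have himage : {w : ℂ | ∃ n : ℤ,
        w = (Complex.exp (-(((2 * n : ℤ) : ℂ) * (α : ℂ)) * Complex.I) +
             Complex.exp (-(((2 * n : ℤ) : ℂ) * (β : ℂ)) * Complex.I)) / 2} =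
      F '' kroneckerSubgroup (α / π) (β / π) := by
    ext w
    constructor
    · rintro ⟨n, rfl⟩
      refine ⟨_, mk_mem_kroneckerSubgroup _ _ n 0 0, ?_⟩
      simp only [F, Function.comp_apply, Prod.smul_mk, smul_eq_mul,
        exp_neg_two_pi_mul_int_add_mul_I]
    · rintro ⟨_, ⟨n, p, q, rfl⟩, rfl⟩
      exact ⟨n, by simp only [F, Function.comp_apply, Prod.smul_mk, smul_eq_mul,
        exp_neg_two_pi_mul_int_add_mul_I]⟩
  have hrange : Set.range F = Metric.closedBall 0 1 := by
    have hscale : Function.Surjective fun w : ℝ × ℝ => -(2 * π) • w := fun w =>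
      ⟨(-(2 * π))⁻¹ • w, smul_inv_smul₀ (by simp [pi_ne_zero]) w⟩
    rw [hscale.range_comp, range_exp_add_exp_div_two]
  rw [himage, ← closure_image_closure (by fun_prop), hdense.closure_eq, Set.image_univ, hrange,
    Metric.isClosed_closedBall.closure_eq]

/-- The values ρ̂(n) at even integers n are dense in the closed unit disk. -/
theorem fourier_range_even_dense_in_disk (α β : ℝ)
    (hα : α ∈ Set.Ioo (0 : ℝ) (2 * π)) (hβ : β ∈ Set.Ioo (0 : ℝ) (2 * π))
    (hind : LinearIndependent ℚ ![α, β, π]) :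
    closure {w : ℂ | ∃ n : ℤ,
        w = (Complex.exp (-(((2 * n : ℤ) : ℂ) * (α : ℂ)) * Complex.I) +
             Complex.exp (-(((2 * n : ℤ) : ℂ) * (β : ℂ)) * Complex.I)) / 2} =
      Metric.closedBall (0 : ℂ) 1 :=
  fourier_range_even_dense_in_disk_general α β hind
end
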